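/- arXiv:2508.08449 — 3 statements merged into one kernel-verified Lean document; each statement's English description precedes it below -/
import Mathlib

section
/- (Weighted Kolmogorov criterion) Let K be a compact subset of ℂ, n ∈ ℕ, w : K → [0,∞) a bounded upper semicontinuous function nonzero at at least n+1 points of K, and P_n a monic polynomial of degree n. Let K₀ be the set of w-extremal points of P_n on K. Then P_n minimizes ‖·‖_{K,w} among monic polynomials of degree n if and only if for every polynomial q of degree at most n−1 one has max_{z₀∈K₀} Re[ P_n(z₀) · conj(q(z₀)) ] ≥ 0. -/
/-!
Everything rests on `|P + t q|² = |P|² + 2t Re (P · conj q) + t² |q|²`. If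
`Re (P · conj q) < 0` on the whole extremal set, then by upper semicontinuity and compactness
every point of `K` either has `w |P|` below `‖P‖` by a fixed margin or has
`Re (P · conj q)` below `0` by a fixed margin; in both cases `w |P + t q| < ‖P‖` for small
`t > 0`, and since `w |P + t q|` attains its maximum, `P + t q` beats `P`. Conversely, if
`Re (P(z₀) · conj (Q - P)(z₀)) ≥ 0` at an extremal point `z₀`, then `|Q(z₀)| ≥ |P(z₀)|`.
-/

open Polynomial Set Filter Topology ComplexConjugate

/-- The weighted sup norm `‖P‖_{E,v} = sup_{z ∈ E} v(z) |P(z)|`. -/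
noncomputable def wnorm (E : Set ℂ) (v : ℂ → ℝ) (P : Polynomial ℂ) : ℝ :=
  sSup ((fun z => v z * ‖P.eval z‖) '' E)

section Semicontinuity

variable {α : Type*} [TopologicalSpace α] {s : Set α}

theorem UpperSemicontinuousOn.mul_of_nonneg {f g : α → ℝ} (hf : UpperSemicontinuousOn f s)
    (hg : UpperSemicontinuousOn g s) (hf0 : ∀ x ∈ s, 0 ≤ f x) (hg0 : ∀ x ∈ s, 0 ≤ g x) :
    UpperSemicontinuousOn (fun x => f x * g x) s := by
  intro x hx y hy
  have hε : ∀ᶠ ε in 𝓝[>] (0 : ℝ), (f x + ε) * (g x + ε) < y := by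
    refine (Tendsto.eventually_lt_const hy ?_).filter_mono nhdsWithin_le_nhds
    exact ((continuous_const.add continuous_id).mul (continuous_const.add continuous_id)).tendsto'
      0 _ (by simp)
  obtain ⟨ε, hεy, hε0⟩ := (hε.and self_mem_nhdsWithin).exists
  filter_upwards [hf x hx _ (lt_add_of_pos_right _ hε0), hg x hx _ (lt_add_of_pos_right _ hε0),
    self_mem_nhdsWithin] with z hfz hgz hz
  exact (mul_lt_mul'' hfz hgz (hf0 z hz) (hg0 z hz)).trans hεy

theorem UpperSemicontinuousOn.exists_forall_le_of_forall_lt {β : Type*} [LinearOrder β]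
    {f : α → β} (hf : UpperSemicontinuousOn f s) (hs : IsCompact s) (hne : s.Nonempty) {M : β}
    (h : ∀ x ∈ s, f x < M) : ∃ M' < M, ∀ x ∈ s, f x ≤ M' := by
  obtain ⟨a, ha, hmax⟩ := hf.exists_isMaxOn hne hs
  exact ⟨f a, h a ha, hmax⟩

end Semicontinuity

namespace Complex

theorem norm_le_norm_add_of_re_mul_conj_nonneg {a b : ℂ} (h : 0 ≤ (a * conj b).re) :
    ‖a‖ ≤ ‖a + b‖ := by
  have := normSq_add a b
  rw [← sq_le_sq₀ (norm_nonneg _) (norm_nonneg _), Complex.sq_norm, Complex.sq_norm]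
  nlinarith [normSq_nonneg b]

theorem norm_add_ofReal_mul_lt {a b : ℂ} {t : ℝ} (ht : 0 < t)
    (h : t * ‖b‖ ^ 2 < -2 * (a * conj b).re) : ‖a + t * b‖ < ‖a‖ := by
  rw [← sq_lt_sq₀ (norm_nonneg _) (norm_nonneg _), Complex.sq_norm, Complex.sq_norm, normSq_add,
    normSq_mul, normSq_ofReal, map_mul, conj_ofReal, mul_left_comm, re_ofReal_mul,
    ← Complex.sq_norm b]
  nlinarith

end Complex

def extremalSet (K : Set ℂ) (w : ℂ → ℝ) (P : ℂ[X]) : Set ℂ :=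
  {z ∈ K | w z * ‖P.eval z‖ = wnorm K w P}

section WeightedNorm

variable {K : Set ℂ} {w : ℂ → ℝ}

theorem upperSemicontinuousOn_weighted (hw0 : ∀ z ∈ K, 0 ≤ w z)
    (husc : UpperSemicontinuousOn w K) (R : ℂ[X]) :
    UpperSemicontinuousOn (fun z => w z * ‖R.eval z‖) K :=
  husc.mul_of_nonneg (R.continuous.norm.upperSemicontinuous.upperSemicontinuousOn K) hw0
    fun _ _ => norm_nonneg _

theorem le_wnorm (hK : IsCompact K) (hw0 : ∀ z ∈ K, 0 ≤ w z) (husc : UpperSemicontinuousOn w K)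
    (R : ℂ[X]) {z : ℂ} (hz : z ∈ K) : w z * ‖R.eval z‖ ≤ wnorm K w R :=
  le_csSup ((upperSemicontinuousOn_weighted hw0 husc R).bddAbove_of_isCompact hK) ⟨z, hz, rfl⟩

theorem wnorm_lt_of_forall_lt (hK : IsCompact K) (hw0 : ∀ z ∈ K, 0 ≤ w z)
    (husc : UpperSemicontinuousOn w K) (hne : K.Nonempty) {R : ℂ[X]} {M : ℝ}
    (h : ∀ z ∈ K, w z * ‖R.eval z‖ < M) : wnorm K w R < M := by
  obtain ⟨M', hM', hle⟩ :=
    (upperSemicontinuousOn_weighted hw0 husc R).exists_forall_le_of_forall_lt hK hne h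
  exact (csSup_le (hne.image _) (forall_mem_image.2 hle)).trans_lt hM'

theorem wnorm_pos (hK : IsCompact K) (hw0 : ∀ z ∈ K, 0 ≤ w z) (husc : UpperSemicontinuousOn w K)
    {R : ℂ[X]} (hR : R ≠ 0) {S : Finset ℂ} (hSK : ↑S ⊆ K) (hcard : R.natDegree < S.card)
    (hSw : ∀ z ∈ S, w z ≠ 0) : 0 < wnorm K w R := by
  obtain ⟨z, hzS, hz⟩ : ∃ z ∈ S, R.eval z ≠ 0 := by
    by_contra! h
    exact hR (eq_zero_of_natDegree_lt_card_of_eval_eq_zero' R S h hcard)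
  have hwz : 0 < w z := (hw0 z (hSK hzS)).lt_of_ne' (hSw z hzS)
  exact (mul_pos hwz (norm_pos_iff.2 hz)).trans_le (le_wnorm hK hw0 husc R (hSK hzS))

theorem wnorm_le_of_re_mul_conj_nonneg (hK : IsCompact K) (hw0 : ∀ z ∈ K, 0 ≤ w z)
    (husc : UpperSemicontinuousOn w K) {P Q : ℂ[X]} {z : ℂ} (hz : z ∈ extremalSet K w P)
    (h : 0 ≤ (P.eval z * conj ((Q - P).eval z)).re) : wnorm K w P ≤ wnorm K w Q :=
  calc wnorm K w P = w z * ‖P.eval z‖ := hz.2.symm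
    _ ≤ w z * ‖Q.eval z‖ := by
      refine mul_le_mul_of_nonneg_left ?_ (hw0 z hz.1)
      simpa using Complex.norm_le_norm_add_of_re_mul_conj_nonneg h
    _ ≤ wnorm K w Q := le_wnorm hK hw0 husc Q hz.1

theorem exists_wnorm_add_smul_lt (hK : IsCompact K) (hw0 : ∀ z ∈ K, 0 ≤ w z)
    (husc : UpperSemicontinuousOn w K) (hne : K.Nonempty) {P q : ℂ[X]} (hP : 0 < wnorm K w P)
    (hq : ∀ z ∈ extremalSet K w P, (P.eval z * conj (q.eval z)).re < 0) :
    ∃ t : ℝ, 0 < t ∧ wnorm K w (P + (t : ℂ) • q) < wnorm K w P := by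
  set M := wnorm K w P
  set g : ℂ → ℝ := fun z => (P.eval z * conj (q.eval z)).re
  obtain ⟨M', hM'M, hM'⟩ : ∃ M' < M, ∀ z ∈ K, min (w z * ‖P.eval z‖) (g z + M) ≤ M' := by
    refine ((upperSemicontinuousOn_weighted hw0 husc P).inf ?_).exists_forall_le_of_forall_lt
      hK hne fun z hz => ?_
    · exact (by fun_prop : Continuous fun z => g z + M).upperSemicontinuous.upperSemicontinuousOn _
    · rcases (le_wnorm hK hw0 husc P hz).lt_or_eq with hlt | heq
      · exact min_lt_of_left_lt hlt
      · exact min_lt_of_right_lt (by linarith [hq z ⟨hz, heq⟩])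
  obtain ⟨C, hC⟩ := hK.exists_bound_of_continuousOn q.continuous.continuousOn
  obtain ⟨t, ⟨htC, htq⟩, ht⟩ :
      ∃ t : ℝ, (t * C ^ 2 < M - M' ∧ t * wnorm K w q < M - M') ∧ 0 < t := by
    have hsmall (a : ℝ) : ∀ᶠ t in 𝓝[>] (0 : ℝ), t * a < M - M' :=
      ((continuous_mul_const a).tendsto' 0 0 (zero_mul a)).eventually_lt_const
        (sub_pos.2 hM'M) |>.filter_mono nhdsWithin_le_nhds
    exact ((hsmall _).and (hsmall _) |>.and self_mem_nhdsWithin).exists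
  refine ⟨t, ht, wnorm_lt_of_forall_lt hK hw0 husc hne fun z hz => ?_⟩
  have heval : (P + (t : ℂ) • q).eval z = P.eval z + t * q.eval z := by simp
  rw [heval]
  rcases min_le_iff.1 (hM' z hz) with hfar | hnear
  · calc w z * ‖P.eval z + t * q.eval z‖ ≤ w z * ‖P.eval z‖ + t * (w z * ‖q.eval z‖) := by
          have := norm_add_le (P.eval z) (t * q.eval z)
          rw [norm_mul, Complex.norm_real, Real.norm_of_nonneg ht.le] at this
          nlinarith [hw0 z hz]
      _ ≤ M' + t * wnorm K w q := by gcongr; exact le_wnorm hK hw0 husc q hz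
      _ < M := by linarith
  · have hqC : t * ‖q.eval z‖ ^ 2 ≤ t * C ^ 2 :=
      mul_le_mul_of_nonneg_left (pow_le_pow_left₀ (norm_nonneg _) (hC z hz) 2) ht.le
    have hnorm : ‖P.eval z + t * q.eval z‖ < ‖P.eval z‖ :=
      Complex.norm_add_ofReal_mul_lt ht (by linarith)
    rcases (hw0 z hz).eq_or_lt with hw | hw
    · rwa [← hw, zero_mul]
    · exact (mul_lt_mul_of_pos_left hnorm hw).trans_le (le_wnorm hK hw0 husc P hz)

end WeightedNorm

theorem stmt5_general (K : Set ℂ) (hK : IsCompact K) (n : ℕ) (w : ℂ → ℝ)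
    (hw0 : ∀ z ∈ K, 0 ≤ w z)
    (husc : UpperSemicontinuousOn w K)
    (hsupp : ∃ S : Finset ℂ, ↑S ⊆ K ∧ n + 1 ≤ S.card ∧ ∀ z ∈ S, w z ≠ 0)
    (P : Polynomial ℂ) (hmonic : P.Monic) (hdeg : P.natDegree = n) :
    (∀ Q : Polynomial ℂ, Q.Monic → Q.natDegree = n → wnorm K w P ≤ wnorm K w Q) ↔
      ∀ q : Polynomial ℂ, q.degree < n →
        ∃ z₀ ∈ {z ∈ K | w z * ‖P.eval z‖ = wnorm K w P},
          0 ≤ (P.eval z₀ * (starRingEnd ℂ) (q.eval z₀)).re := by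
  obtain ⟨S, hSK, hcard, hSw⟩ := hsupp
  obtain ⟨z, hz⟩ := Finset.card_pos.1 (by omega : 0 < S.card)
  have hne : K.Nonempty := ⟨z, hSK hz⟩
  have hP := wnorm_pos hK hw0 husc hmonic.ne_zero hSK (by omega) hSw
  have hPdeg : P.degree = n := by rw [degree_eq_natDegree hmonic.ne_zero, hdeg]
  constructor
  · intro hmin q hq
    by_contra! hneg
    obtain ⟨t, -, ht⟩ := exists_wnorm_add_smul_lt hK hw0 husc hne hP hneg
    have hlt : ((t : ℂ) • q).degree < P.degree := (degree_smul_le _ _).trans_lt (hPdeg ▸ hq)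
    exact ht.not_ge (hmin _ (hmonic.add_of_left hlt)
      ((natDegree_add_eq_left_of_degree_lt hlt).trans hdeg))
  · intro h Q hQ hQdeg
    have hQP : Q.degree = P.degree := by rw [degree_eq_natDegree hQ.ne_zero, hQdeg, hPdeg]
    obtain ⟨z, hz, hre⟩ := h (Q - P) <| hPdeg ▸ hQP ▸
      degree_sub_lt_left hQP hQ.ne_zero (by rw [hQ.leadingCoeff, hmonic.leadingCoeff])
    exact wnorm_le_of_re_mul_conj_nonneg hK hw0 husc hz hre

/-- Weighted Kolmogorov criterion. -/
theorem stmt5 (K : Set ℂ) (hK : IsCompact K) (n : ℕ) (w : ℂ → ℝ)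
    (hw0 : ∀ z ∈ K, 0 ≤ w z) (hwb : BddAbove (w '' K))
    (husc : UpperSemicontinuousOn w K)
    (hsupp : ∃ S : Finset ℂ, ↑S ⊆ K ∧ n + 1 ≤ S.card ∧ ∀ z ∈ S, w z ≠ 0)
    (P : Polynomial ℂ) (hmonic : P.Monic) (hdeg : P.natDegree = n) :
    (∀ Q : Polynomial ℂ, Q.Monic → Q.natDegree = n → wnorm K w P ≤ wnorm K w Q) ↔
      ∀ q : Polynomial ℂ, q.degree < n →
        ∃ z₀ ∈ {z ∈ K | w z * ‖P.eval z‖ = wnorm K w P},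
          0 ≤ (P.eval z₀ * (starRingEnd ℂ) (q.eval z₀)).re :=
  stmt5_general K hK n w hw0 husc hsupp P hmonic hdeg
end

section
/- (Weighted alternation theorem, sufficiency) Let K be a compact subset of ℝ, n ∈ ℕ, w : K → [0,∞) a bounded upper semicontinuous function nonzero at at least n+1 points of K, and P_n a monic polynomial of degree n with real coefficients. If there exist points x₀ < x₁ < ⋯ < x_n in K such that w(x_j) P_n(x_j) = (−1)^{n−j} ‖P_n‖_{K,w} for j = 0, 1, …, n, then P_n is the weighted Chebyshev polynomial of degree n on K with respect to w. -/
open Polynomial Metric Set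

/-!
If a monic `Q` of degree `n` had `‖Q‖_{K,w} < ‖P‖_{K,w}`, then at each alternation point
`w(x_j) Re (P - Q)(x_j)` would have the sign `(-1)^(n-j)` of `w(x_j) P(x_j)`, since
`w(x_j) |Q(x_j)|` is too small to compensate. So `Re (P - Q)` changes sign `n` times on `ℝ`.
But on `ℝ` it is the real polynomial `((P - Q) + conj (P - Q)) / 2` of degree `< n`,
hence it vanishes identically, which is absurd.
-/

section IntermediateValue

variable {α : Type*} [ConditionallyCompleteLinearOrder α] [TopologicalSpace α] [OrderTopology α]
  [DenselyOrdered α]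

theorem exists_mem_Ioo_eq_zero_of_mul_neg {a b : α} (hab : a ≤ b) {f : α → ℝ}
    (hf : ContinuousOn f (Icc a b)) (h : f a * f b < 0) : ∃ c ∈ Ioo a b, f c = 0 := by
  rcases mul_neg_iff.1 h with ⟨ha, hb⟩ | ⟨ha, hb⟩
  · exact intermediate_value_Ioo' hab hf ⟨hb, ha⟩
  · exact intermediate_value_Ioo hab hf ⟨ha, hb⟩

theorem exists_strictMono_zeros_of_mul_neg {f : α → ℝ} (hf : Continuous f) {n : ℕ}
    {x : Fin (n + 1) → α} (hx : StrictMono x)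
    (hsign : ∀ j : Fin n, f (x j.castSucc) * f (x j.succ) < 0) :
    ∃ t : Fin n → α, StrictMono t ∧ ∀ i, f (t i) = 0 := by
  have hzero (j : Fin n) : ∃ c ∈ Ioo (x j.castSucc) (x j.succ), f c = 0 :=
    exists_mem_Ioo_eq_zero_of_mul_neg (hx Fin.castSucc_lt_succ).le hf.continuousOn (hsign j)
  choose t ht hft using hzero
  refine ⟨t, fun i j hij => ?_, hft⟩
  have hle : x i.succ ≤ x j.castSucc := hx.monotone (Fin.succ_le_castSucc_iff.2 hij)
  exact (ht i).2.trans (hle.trans_lt (ht j).1)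

end IntermediateValue

theorem mul_neg_of_forall_neg_one_pow_mul_pos {n : ℕ} {a : Fin (n + 1) → ℝ}
    (h : ∀ j : Fin (n + 1), 0 < (-1) ^ (n - j) * a j) (j : Fin n) :
    a j.castSucc * a j.succ < 0 := by
  have hpos := mul_pos (h j.castSucc) (h j.succ)
  obtain ⟨k, hk⟩ : ∃ k, n - j = k + 1 ∧ n - (j + 1) = k := ⟨n - (j + 1), by omega, rfl⟩
  simp only [Fin.val_castSucc, Fin.val_succ, hk, pow_succ] at hpos
  rcases neg_one_pow_eq_or ℝ k with hk | hk <;> rw [hk] at hpos <;> linarith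

theorem Polynomial.re_eval_ofReal_eq_zero_of_degree_lt {R : ℂ[X]} {n : ℕ}
    (hR : R.degree < n) {t : Fin n → ℝ} (ht : Function.Injective t)
    (hzero : ∀ i, (R.eval (t i : ℂ)).re = 0) (r : ℝ) : (R.eval (r : ℂ)).re = 0 := by
  set T := R + R.map (starRingEnd ℂ)
  have hT (s : ℝ) : T.eval (s : ℂ) = 2 * (R.eval (s : ℂ)).re := by
    rw [eval_add, eval_map, ← Complex.conj_ofReal, eval₂_hom, Complex.conj_ofReal,
      Complex.add_conj]
    push_cast
    ring
  have hTdeg : T.degree < (Finset.univ : Finset (Fin n)).card := by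
    rw [Finset.card_univ, Fintype.card_fin]
    refine (degree_add_le _ _).trans_lt (max_lt hR ?_)
    rwa [degree_map_eq_of_injective (RingHom.injective _)]
  have hT0 : T = 0 := eq_zero_of_degree_lt_of_eval_index_eq_zero (s := Finset.univ)
    (Complex.ofReal_injective.comp ht).injOn hTdeg (fun i _ => by simp [hT, hzero])
  simpa [hT0] using (hT r).symm

theorem pos_mul_re_sub_of_mul_eq {w M s : ℝ} {p q : ℂ} (hw : 0 ≤ w) (hs : |s| = 1)
    (hp : (w : ℂ) * p = s * M) (hq : w * ‖q‖ < M) : 0 < s * (p - q).re := by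
  have hpre : w * p.re = s * M := by simpa using congrArg Complex.re hp
  have hss : s * s = 1 := by rw [← abs_mul_abs_self, hs, one_mul]
  have hsq : s * (w * q.re) ≤ w * ‖q‖ := calc
    s * (w * q.re) ≤ |s * (w * q.re)| := le_abs_self _
    _ = w * |q.re| := by rw [abs_mul, hs, one_mul, abs_mul, abs_of_nonneg hw]
    _ ≤ w * ‖q‖ := mul_le_mul_of_nonneg_left (Complex.abs_re_le_norm q) hw
  have hprod : w * (s * (p - q).re) = M - s * (w * q.re) := by
    rw [Complex.sub_re]
    linear_combination s * hpre + M * hss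
  exact pos_of_mul_pos_right (by linarith) hw

theorem le_wnorm_s9 {K : Set ℂ} (hK : IsCompact K) {w : ℂ → ℝ} (hwb : BddAbove (w '' K))
    (Q : ℂ[X]) {z : ℂ} (hz : z ∈ K) : w z * ‖Q.eval z‖ ≤ wnorm K w Q := by
  obtain ⟨Cw, hCw⟩ := hwb
  obtain ⟨CQ, hCQ⟩ := hK.exists_bound_of_continuousOn (Q.continuous.continuousOn (s := K))
  refine le_csSup ⟨|Cw| * CQ, ?_⟩ (mem_image_of_mem _ hz)
  rintro _ ⟨y, hy, rfl⟩
  calc w y * ‖Q.eval y‖ ≤ |Cw| * ‖Q.eval y‖ :=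
        mul_le_mul_of_nonneg_right ((hCw (mem_image_of_mem w hy)).trans (le_abs_self Cw))
          (norm_nonneg _)
    _ ≤ |Cw| * CQ := mul_le_mul_of_nonneg_left (hCQ y hy) (abs_nonneg Cw)

theorem stmt9_general (K : Set ℂ) (hK : IsCompact K)
    (n : ℕ) (w : ℂ → ℝ)
    (hw0 : ∀ z ∈ K, 0 ≤ w z) (hwb : BddAbove (w '' K))
    (P : Polynomial ℂ) (hmonic : P.Monic) (hdeg : P.natDegree = n)
    (x : Fin (n + 1) → ℝ) (hmono : StrictMono x)
    (hxK : ∀ j, (x j : ℂ) ∈ K)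
    (halt : ∀ j : Fin (n + 1),
      (w (x j) : ℂ) * P.eval ((x j : ℂ)) = (-1 : ℂ) ^ (n - (j : ℕ)) * (wnorm K w P : ℂ)) :
    ∀ Q : Polynomial ℂ, Q.Monic → Q.natDegree = n → wnorm K w P ≤ wnorm K w Q := by
  intro Q hQm hQd
  by_contra! hlt
  have hdegP : P.degree = n := by rw [degree_eq_natDegree hmonic.ne_zero, hdeg]
  have hRdeg : (P - Q).degree < n := hdegP ▸ degree_sub_lt_left
    (by rw [hdegP, degree_eq_natDegree hQm.ne_zero, hQd]) hmonic.ne_zero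
    (by rw [hmonic.leadingCoeff, hQm.leadingCoeff])
  have hsign (j : Fin (n + 1)) : 0 < (-1) ^ (n - (j : ℕ)) * ((P - Q).eval (x j : ℂ)).re :=
    eval_sub P Q _ ▸ pos_mul_re_sub_of_mul_eq (s := (-1) ^ (n - (j : ℕ))) (hw0 _ (hxK j))
      (by simp) (by push_cast; exact halt j) ((le_wnorm_s9 hK hwb Q (hxK j)).trans_lt hlt)
  obtain ⟨t, ht, hzero⟩ := exists_strictMono_zeros_of_mul_neg
    (Complex.continuous_re.comp ((P - Q).continuous.comp Complex.continuous_ofReal)) hmono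
    (mul_neg_of_forall_neg_one_pow_mul_pos hsign)
  have h0 := hsign 0
  rw [(P - Q).re_eval_ofReal_eq_zero_of_degree_lt hRdeg ht.injective hzero, mul_zero] at h0
  exact h0.false

/-- Weighted alternation theorem (sufficiency). -/
theorem stmt9 (K : Set ℂ) (hK : IsCompact K) (hKreal : ∀ z ∈ K, z.im = 0)
    (n : ℕ) (w : ℂ → ℝ)
    (hw0 : ∀ z ∈ K, 0 ≤ w z) (hwb : BddAbove (w '' K))
    (husc : UpperSemicontinuousOn w K)
    (hsupp : ∃ S : Finset ℂ, ↑S ⊆ K ∧ n + 1 ≤ S.card ∧ ∀ z ∈ S, w z ≠ 0)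
    (P : Polynomial ℂ) (hmonic : P.Monic) (hdeg : P.natDegree = n)
    (hreal : ∀ k : ℕ, (P.coeff k).im = 0)
    (x : Fin (n + 1) → ℝ) (hmono : StrictMono x)
    (hxK : ∀ j, (x j : ℂ) ∈ K)
    (halt : ∀ j : Fin (n + 1),
      (w (x j) : ℂ) * P.eval ((x j : ℂ)) = (-1 : ℂ) ^ (n - (j : ℕ)) * (wnorm K w P : ℂ)) :
    ∀ Q : Polynomial ℂ, Q.Monic → Q.natDegree = n → wnorm K w P ≤ wnorm K w Q :=
  stmt9_general K hK n w hw0 hwb P hmonic hdeg x hmono hxK halt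
end

section
/- (Invariance under polynomial preimages) Let L ⊂ ℂ be a compact set containing at least n+1 points, w_L : L → [0,∞) a bounded upper semicontinuous function nonzero at at least n+1 points of L, and p(z) = a_m z^m + ⋯ + a₀ a polynomial of degree m ≥ 1 with a_m ≠ 0. Define K = p⁻¹(L) and w_K : K → [0,∞) by w_K(z) = w_L(p(z)). Then the weighted Chebyshev polynomial of degree nm on K with respect to w_K is given by T_{nm,w_K}^{(K)}(z) = T_{n,w_L}^{(L)}(p(z)) / a_m^n, where T_{n,w_L}^{(L)} is the weighted Chebyshev polynomial of degree n on L with respect to w_L. -/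
/-!
For `p` of degree `m`, Vieta's formulas show that the elementary symmetric functions of order
`< m` of the fibre `p⁻¹(w)` (with multiplicity) do not depend on `w`, hence (Newton) neither do
its power sums of order `< m`. Dividing by `p` repeatedly, the fibre sum `w ↦ ∑_{p(z) = w} Q(z)`
of a monic `Q` of degree `nm` is then a polynomial in `w` of degree `n` with leading coefficient
`m / aₘⁿ`. Normalised, it is a monic competitor on `L` of weighted norm at most `|aₘ|ⁿ ‖Q‖_K`,
while `‖T ∘ p / aₘⁿ‖_K = ‖T‖_L / |aₘ|ⁿ` because `p` maps `K` onto `L`.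
-/

open Polynomial Set

section PowerSums

open Finset

variable {R : Type*} [CommRing R]

theorem Multiset.sum_map_pow_eq_esymm_sub_sum (s : Multiset R) {k : ℕ} (hk : 0 < k) :
    (s.map (· ^ k)).sum = (-1) ^ (k + 1) * k * s.esymm k -
      ∑ a ∈ HasAntidiagonal.antidiagonal k with a.1 ∈ Set.Ioo 0 k,
        (-1) ^ a.1 * s.esymm a.1 * (s.map (· ^ a.2)).sum := by
  classical
  have hpsum (j : ℕ) : MvPolynomial.aeval (fun x : s => (x : R)) (MvPolynomial.psum (↥s) R j)
      = (s.map (· ^ j)).sum := by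
    simp only [MvPolynomial.psum, map_sum, map_pow, MvPolynomial.aeval_X]
    rw [← s.map_univ_comp_coe (· ^ j)]
    rfl
  have hesymm (j : ℕ) : MvPolynomial.aeval (fun x : s => (x : R)) (MvPolynomial.esymm (↥s) R j)
      = s.esymm j := by
    rw [MvPolynomial.aeval_esymm_eq_multiset_esymm, Multiset.map_univ_coe]
  simpa only [map_sub, map_mul, map_sum, map_pow, map_neg, map_one, map_natCast, hpsum, hesymm]
    using congrArg (MvPolynomial.aeval (fun x : s => (x : R)))
      (MvPolynomial.psum_eq_mul_esymm_sub_sum (↥s) R k hk)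

theorem Multiset.sum_map_pow_eq_of_esymm_eq {s t : Multiset R} (hcard : card s = card t) (j : ℕ)
    (h : ∀ k ≤ j, s.esymm k = t.esymm k) : (s.map (· ^ j)).sum = (t.map (· ^ j)).sum := by
  induction j using Nat.strong_induction_on with
  | _ j ih =>
    rcases j.eq_zero_or_pos with rfl | hj
    · simp [hcard]
    rw [sum_map_pow_eq_esymm_sub_sum s hj, sum_map_pow_eq_esymm_sub_sum t hj, h j le_rfl]
    congr 1
    refine sum_congr rfl fun a ha => ?_
    simp only [Finset.mem_filter, HasAntidiagonal.mem_antidiagonal, Set.mem_Ioo] at ha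
    rw [h a.1 (by omega), ih a.2 (by omega) fun k hk => h k (by omega)]

theorem Multiset.sum_map_eval_eq_of_esymm_eq {s t : Multiset R} (hcard : card s = card t)
    (q : R[X]) (h : ∀ k ≤ q.natDegree, s.esymm k = t.esymm k) :
    (s.map fun z => q.eval z).sum = (t.map fun z => q.eval z).sum := by
  have hexpand (u : Multiset R) : (u.map fun z => q.eval z).sum
      = ∑ i ∈ Finset.range (q.natDegree + 1), q.coeff i * (u.map (· ^ i)).sum := by
    simp only [eval_eq_sum_range, sum_eq_multiset_sum]
    rw [sum_map_sum_map]
    simp only [sum_map_mul_left]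
  rw [hexpand, hexpand]
  refine sum_congr rfl fun i hi => ?_
  rw [sum_map_pow_eq_of_esymm_eq hcard i fun k hk => h k (by grind)]

end PowerSums

namespace Polynomial

theorem eval_eq_of_mem_roots_sub_C {R : Type*} [CommRing R] [IsDomain R] {p : R[X]} {w z : R}
    (hz : z ∈ (p - C w).roots) : p.eval z = w := by
  simpa [sub_eq_zero] using isRoot_of_mem_roots hz

variable {F : Type*} [Field F] [IsAlgClosed F] {p : F[X]}

theorem esymm_roots_sub_C {k : ℕ} (hk : k < p.natDegree) (w : F) :
    (p - C w).roots.esymm k = p.roots.esymm k := by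
  have hvieta (f : F[X]) (hk : k ≤ f.natDegree) :
      f.coeff (f.natDegree - k) = f.leadingCoeff * (-1) ^ k * f.roots.esymm k := by
    rw [coeff_eq_esymm_roots_of_card IsAlgClosed.card_roots_eq_natDegree (Nat.sub_le _ _),
      Nat.sub_sub_self hk]
  have hp : p ≠ 0 := ne_zero_of_natDegree_gt hk
  have hlc : (p - C w).leadingCoeff = p.leadingCoeff :=
    leadingCoeff_sub_of_degree_lt
      (degree_C_le.trans_lt (natDegree_pos_iff_degree_pos.mp (by omega)))
  have hne : p.leadingCoeff * (-1) ^ k ≠ 0 := mul_ne_zero (leadingCoeff_ne_zero.mpr hp) (by simp)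
  have h := hvieta (p - C w) (by rw [natDegree_sub_C]; exact hk.le)
  rw [natDegree_sub_C, coeff_sub, coeff_C, if_neg (by omega), sub_zero, hvieta p hk.le, hlc] at h
  exact (mul_left_cancel₀ hne h).symm

theorem sum_roots_sub_C_eval {q : F[X]} (hq : q.natDegree < p.natDegree) (w : F) :
    ((p - C w).roots.map fun z => q.eval z).sum = (p.roots.map fun z => q.eval z).sum :=
  Multiset.sum_map_eval_eq_of_esymm_eq
    (by rw [IsAlgClosed.card_roots_eq_natDegree, IsAlgClosed.card_roots_eq_natDegree,
      natDegree_sub_C]) q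
    fun _ hk => esymm_roots_sub_C (hk.trans_lt hq) w

theorem exists_sum_roots_sub_C_eval_eq (hp : 0 < p.natDegree) (n : ℕ) {Q : F[X]}
    (hQ : Q.natDegree ≤ n * p.natDegree) :
    ∃ P : F[X], P.natDegree ≤ n ∧
      P.coeff n = p.natDegree * Q.coeff (n * p.natDegree) / p.leadingCoeff ^ n ∧
      ∀ w, ((p - C w).roots.map fun z => Q.eval z).sum = P.eval w := by
  have hp0 : p ≠ 0 := ne_zero_of_natDegree_gt hp
  induction n generalizing Q with
  | zero =>
    rw [zero_mul, Nat.le_zero, ← eq_C_coeff_zero_iff_natDegree_eq_zero] at hQ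
    refine ⟨C (p.natDegree * Q.coeff 0), (natDegree_C _).le, by simp, fun w => ?_⟩
    rw [hQ]
    simp [IsAlgClosed.card_roots_eq_natDegree]
  | succ n ih =>
    set D := Q / p
    set r := Q % p
    have hdiv : p * D + r = Q := EuclideanDomain.div_add_mod Q p
    have hr : r.natDegree < p.natDegree := by
      rcases eq_or_ne r 0 with hr0 | hr0
      · rw [hr0, natDegree_zero]; exact hp
      · exact natDegree_lt_natDegree hr0 (degree_mod_lt Q hp0)
    have hD : D.natDegree ≤ n * p.natDegree := by
      have := natDegree_divByMonic Q (monic_mul_leadingCoeff_inv hp0)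
      rw [natDegree_mul_leadingCoeff_inv _ hp0] at this
      refine (natDegree_C_mul_le _ _).trans (this.trans_le ?_)
      rw [Nat.succ_mul] at hQ
      omega
    obtain ⟨PD, hPDdeg, hPDcoeff, hPD⟩ := ih hD
    set c := (p.roots.map fun z => r.eval z).sum
    refine ⟨X * PD + C c, ?_, ?_, fun w => ?_⟩
    · rw [natDegree_add_C]
      exact natDegree_mul_le.trans (by rw [natDegree_X]; omega)
    · have hQcoeff :
          Q.coeff ((n + 1) * p.natDegree) = p.leadingCoeff * D.coeff (n * p.natDegree) := by
        rw [← hdiv, coeff_add, Nat.succ_mul, add_comm (n * _),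
          coeff_mul_add_eq_of_natDegree_le le_rfl hD,
          coeff_eq_zero_of_natDegree_lt (p := r) (by omega), add_zero, leadingCoeff]
      rw [coeff_add, coeff_X_mul, coeff_C, if_neg (by omega), add_zero, hPDcoeff, hQcoeff]
      field_simp [leadingCoeff_ne_zero.mpr hp0]
      ring
    · have hfiber : ((p - C w).roots.map fun z => Q.eval z)
          = ((p - C w).roots.map fun z => w * D.eval z + r.eval z) :=
        Multiset.map_congr rfl fun z hz => by
          rw [← hdiv, eval_add, eval_mul, eval_eq_of_mem_roots_sub_C hz]
      rw [hfiber, Multiset.sum_map_add, Multiset.sum_map_mul_left, hPD, sum_roots_sub_C_eval hr]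
      simp only [eval_add, eval_mul, eval_X, eval_C, c]

theorem exists_monic_sum_roots_sub_C_eval_eq [CharZero F] (hp : 0 < p.natDegree) {n : ℕ}
    {Q : F[X]} (hQ : Q.Monic) (hQdeg : Q.natDegree = n * p.natDegree) :
    ∃ P : F[X], P.Monic ∧ P.natDegree = n ∧ ∀ w, P.eval w =
      p.leadingCoeff ^ n / p.natDegree * ((p - C w).roots.map fun z => Q.eval z).sum := by
  obtain ⟨P, hPdeg, hPcoeff, hP⟩ := exists_sum_roots_sub_C_eval_eq hp n hQdeg.le
  have hdeg : (C (p.leadingCoeff ^ n / p.natDegree) * P).natDegree ≤ n :=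
    (natDegree_C_mul_le _ _).trans hPdeg
  have hcoeff : (C (p.leadingCoeff ^ n / p.natDegree) * P).coeff n = 1 := by
    rw [coeff_C_mul, hPcoeff, ← hQdeg, hQ.coeff_natDegree]
    field_simp [leadingCoeff_ne_zero.mpr (ne_zero_of_natDegree_gt hp), hp.ne']
  exact ⟨_, monic_of_natDegree_le_of_coeff_eq_one n hdeg hcoeff,
    natDegree_eq_of_le_of_coeff_ne_zero hdeg (hcoeff ▸ one_ne_zero),
    fun w => by rw [eval_mul, eval_C, hP]⟩

end Polynomial

section WeightedNorm

variable {E : Set ℂ} {v : ℂ → ℝ}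

theorem wnorm_nonneg (hv : ∀ z ∈ E, 0 ≤ v z) (P : ℂ[X]) : 0 ≤ wnorm E v P :=
  Real.sSup_nonneg (by rintro _ ⟨z, hz, rfl⟩; exact mul_nonneg (hv z hz) (norm_nonneg _))

theorem le_wnorm_s14 (hE : IsCompact E) (hv : BddAbove (v '' E)) (P : ℂ[X]) {z : ℂ} (hz : z ∈ E) :
    v z * ‖P.eval z‖ ≤ wnorm E v P := by
  refine le_csSup ?_ (mem_image_of_mem _ hz)
  obtain ⟨B, hB⟩ := hv
  obtain ⟨M, hM⟩ := (hE.image (continuous_norm.comp P.continuous)).bddAbove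
  refine ⟨max B 0 * max M 0, ?_⟩
  rintro _ ⟨x, hx, rfl⟩
  exact mul_le_mul ((hB (mem_image_of_mem v hx)).trans (le_max_left _ _))
    ((hM (mem_image_of_mem _ hx)).trans (le_max_left _ _)) (norm_nonneg _) (le_max_right _ _)

theorem wnorm_le {P : ℂ[X]} {M : ℝ} (hM : 0 ≤ M)
    (h : ∀ z ∈ E, v z * ‖P.eval z‖ ≤ M) : wnorm E v P ≤ M :=
  Real.sSup_le (by rintro _ ⟨z, hz, rfl⟩; exact h z hz) hM

theorem wnorm_C_mul (c : ℂ) (P : ℂ[X]) : wnorm E v (C c * P) = ‖c‖ * wnorm E v P := by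
  rw [wnorm, wnorm, ← smul_eq_mul (a := ‖c‖), ← Real.sSup_smul_of_nonneg (norm_nonneg c),
    ← image_smul, image_image]
  refine congrArg sSup (image_congr fun z _ => ?_)
  simp only [eval_mul, eval_C, norm_mul, smul_eq_mul]
  ring

theorem wnorm_comp_preimage {p : ℂ[X]} (hp : Function.Surjective p.eval) (L : Set ℂ)
    (T : ℂ[X]) : wnorm (p.eval ⁻¹' L) (fun z => v (p.eval z)) (T.comp p) = wnorm L v T := by
  rw [wnorm, wnorm]
  conv_rhs => rw [← image_preimage_eq L hp, image_image]
  simp only [eval_comp]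

theorem wnorm_le_of_eval_eq_mul_sum_roots {L : Set ℂ} (hL : IsCompact L)
    (hv0 : ∀ w ∈ L, 0 ≤ v w) (hvb : BddAbove (v '' L)) {p : ℂ[X]} (hp : 0 < p.natDegree)
    {P Q : ℂ[X]} {c : ℂ}
    (hP : ∀ w, P.eval w = c * ((p - C w).roots.map fun z => Q.eval z).sum) :
    wnorm L v P ≤ ‖c‖ * p.natDegree * wnorm (p.eval ⁻¹' L) (fun z => v (p.eval z)) Q := by
  have hK : IsCompact (p.eval ⁻¹' L) :=
    (p.isProperMap_eval (natDegree_pos_iff_degree_pos.mp hp)).isCompact_preimage hL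
  have hvK : BddAbove ((fun z => v (p.eval z)) '' (p.eval ⁻¹' L)) :=
    hvb.mono (by rintro _ ⟨z, hz, rfl⟩; exact ⟨_, hz, rfl⟩)
  set M := wnorm (p.eval ⁻¹' L) (fun z => v (p.eval z)) Q
  have hM : 0 ≤ M := wnorm_nonneg (E := p.eval ⁻¹' L) (fun z hz => hv0 _ hz) Q
  refine wnorm_le (by positivity) fun w hw => ?_
  have hfiber : ∀ x ∈ (p - C w).roots.map fun z => v w * ‖Q.eval z‖, x ≤ M := by
    simp only [Multiset.mem_map]
    rintro _ ⟨z, hz, rfl⟩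
    have hpz := eval_eq_of_mem_roots_sub_C hz
    have hzK : z ∈ p.eval ⁻¹' L := by rw [Set.mem_preimage, hpz]; exact hw
    simpa only [hpz] using le_wnorm_s14 hK hvK Q hzK
  calc v w * ‖P.eval w‖
      ≤ ‖c‖ * ((p - C w).roots.map fun z => v w * ‖Q.eval z‖).sum := by
        rw [hP, norm_mul, Multiset.sum_map_mul_left, mul_left_comm]
        gcongr
        · exact hv0 w hw
        · exact (norm_multiset_sum_le _).trans_eq (by rw [Multiset.map_map]; rfl)
    _ ≤ ‖c‖ * (p.natDegree * M) := by
        gcongr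
        simpa only [Multiset.card_map, IsAlgClosed.card_roots_eq_natDegree, natDegree_sub_C,
          nsmul_eq_mul] using Multiset.sum_le_card_nsmul _ M hfiber
    _ = ‖c‖ * p.natDegree * M := by ring

end WeightedNorm

theorem stmt14_general (L : Set ℂ) (hL : IsCompact L) (n : ℕ)
    (wL : ℂ → ℝ) (hw0 : ∀ z ∈ L, 0 ≤ wL z) (hwb : BddAbove (wL '' L))
    (p : Polynomial ℂ) (m : ℕ) (hm : 1 ≤ m) (hpdeg : p.natDegree = m)
    (T : Polynomial ℂ) (hTmonic : T.Monic) (hTdeg : T.natDegree = n)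
    (hTmin : ∀ P : Polynomial ℂ, P.Monic → P.natDegree = n → wnorm L wL T ≤ wnorm L wL P)
    (K : Set ℂ) (hK : K = (fun z => p.eval z) ⁻¹' L)
    (wK : ℂ → ℝ) (hwK : ∀ z, wK z = wL (p.eval z))
    (R : Polynomial ℂ) (hR : R = Polynomial.C ((p.leadingCoeff ^ n)⁻¹) * (T.comp p)) :
    R.Monic ∧ R.natDegree = n * m ∧
      ∀ Q : Polynomial ℂ, Q.Monic → Q.natDegree = n * m → wnorm K wK R ≤ wnorm K wK Q := by
  obtain rfl : wK = fun z => wL (p.eval z) := funext hwK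
  subst hK hR hpdeg
  have ha : p.leadingCoeff ^ n ≠ 0 :=
    pow_ne_zero _ (leadingCoeff_ne_zero.mpr (ne_zero_of_natDegree_gt hm))
  have hcomp : (T.comp p).leadingCoeff = p.leadingCoeff ^ n := by
    rw [leadingCoeff_comp (by omega), hTmonic.leadingCoeff, hTdeg, one_mul]
  refine ⟨?_, ?_, fun Q hQ hQdeg => ?_⟩
  · rw [Monic, leadingCoeff_mul, leadingCoeff_C, hcomp, inv_mul_cancel₀ ha]
  · rw [natDegree_C_mul (inv_ne_zero ha), natDegree_comp, hTdeg]
  obtain ⟨P, hP, hPdeg, hPeval⟩ := exists_monic_sum_roots_sub_C_eval_eq hm hQ hQdeg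
  calc wnorm _ _ (C (p.leadingCoeff ^ n)⁻¹ * T.comp p)
      = ‖p.leadingCoeff ^ n‖⁻¹ * wnorm L wL T := by
        rw [wnorm_C_mul, norm_inv, wnorm_comp_preimage (IsAlgClosed.eval_surjective (by omega))]
    _ ≤ ‖p.leadingCoeff ^ n‖⁻¹ * wnorm L wL P := by gcongr; exact hTmin P hP hPdeg
    _ ≤ ‖p.leadingCoeff ^ n‖⁻¹ * (‖p.leadingCoeff ^ n / p.natDegree‖ * p.natDegree *
          wnorm _ _ Q) := by
        gcongr; exact wnorm_le_of_eval_eq_mul_sum_roots hL hw0 hwb hm hPeval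
    _ = wnorm _ _ Q := by
        rw [norm_div, Complex.norm_natCast]
        field_simp [norm_ne_zero_iff.mpr ha, Nat.cast_ne_zero.mpr (by omega : p.natDegree ≠ 0)]

/-- Invariance of weighted Chebyshev polynomials under polynomial preimages:
if `T` is the weighted Chebyshev polynomial of degree `n` on `L` w.r.t. `w_L` and
`K = p⁻¹(L)`, `w_K = w_L ∘ p`, then `T(p(z))/a_m^n` is the weighted Chebyshev polynomial
of degree `nm` on `K` w.r.t. `w_K`. -/
theorem stmt14 (L : Set ℂ) (hL : IsCompact L) (n : ℕ)
    (hLpts : ∃ S : Finset ℂ, ↑S ⊆ L ∧ n + 1 ≤ S.card)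
    (wL : ℂ → ℝ) (hw0 : ∀ z ∈ L, 0 ≤ wL z) (hwb : BddAbove (wL '' L))
    (husc : UpperSemicontinuousOn wL L)
    (hsupp : ∃ S : Finset ℂ, ↑S ⊆ L ∧ n + 1 ≤ S.card ∧ ∀ z ∈ S, wL z ≠ 0)
    (p : Polynomial ℂ) (m : ℕ) (hm : 1 ≤ m) (hpdeg : p.natDegree = m)
    (T : Polynomial ℂ) (hTmonic : T.Monic) (hTdeg : T.natDegree = n)
    (hTmin : ∀ P : Polynomial ℂ, P.Monic → P.natDegree = n → wnorm L wL T ≤ wnorm L wL P)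
    (K : Set ℂ) (hK : K = (fun z => p.eval z) ⁻¹' L)
    (wK : ℂ → ℝ) (hwK : ∀ z, wK z = wL (p.eval z))
    (R : Polynomial ℂ) (hR : R = Polynomial.C ((p.leadingCoeff ^ n)⁻¹) * (T.comp p)) :
    R.Monic ∧ R.natDegree = n * m ∧
      ∀ Q : Polynomial ℂ, Q.Monic → Q.natDegree = n * m → wnorm K wK R ≤ wnorm K wK Q :=
  stmt14_general L hL n wL hw0 hwb p m hm hpdeg T hTmonic hTdeg hTmin K hK wK hwK R hR
end
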